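/- arXiv:1612.03071 — 2 statements merged into one kernel-verified Lean document; each statement's English description precedes it below -/
import Mathlib

section
/- With the cyclic-prefix OFDM block construction and the Alamouti relation c₁(p) = (c₀(p))* for all p, the half-block-shifted sequences satisfy: g̃₀(n + N/2) = (g̃₁(mod(-(n-ν), N) + ν + N/2))* for n = 0, 1, ..., ν, where N is even, g̃ᵤ is the cyclic-prefixed IDFT of cᵤ, and indices are taken within valid block ranges. -/
/-!
The conjugate of `g₁(m) = IDFT(conj c₀)(m)` is `g₀(-m)`, and the IDFT is `N`-periodic in the
time index. So both sides are values of `g₀`, at indices congruent to `n - ν + N/2` and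
`-(ν - n + N/2) = n - ν - N/2` modulo `N`; these agree because `N/2 ≡ -N/2` for even `N`.
-/

noncomputable def idft (N : ℕ) (c : Fin N → ℂ) (m : ℤ) : ℂ :=
  (1 / Real.sqrt N) * ∑ p : Fin N, c p * Complex.exp (2 * Real.pi * Complex.I * p * m / N)

lemma exp_two_pi_mul_I_mul_div_eq_of_modEq {N : ℕ} (p : ℕ) {m m' : ℤ} (h : m ≡ m' [ZMOD N]) :
    Complex.exp (2 * Real.pi * Complex.I * p * m / N) =
      Complex.exp (2 * Real.pi * Complex.I * p * m' / N) := by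
  rcases eq_or_ne N 0 with rfl | hN
  · simp
  obtain ⟨k, hk⟩ := Int.modEq_iff_dvd.mp h
  have hk' : (m' : ℂ) = m + N * k := by
    rw [← sub_eq_iff_eq_add']
    exact_mod_cast hk
  rw [Complex.exp_eq_exp_iff_exists_int]
  refine ⟨-(p * k), ?_⟩
  rw [hk']
  field_simp
  push_cast
  ring

lemma idft_eq_of_modEq {N : ℕ} (c : Fin N → ℂ) {m m' : ℤ} (h : m ≡ m' [ZMOD N]) :
    idft N c m = idft N c m' := by
  unfold idft
  simp_rw [exp_two_pi_mul_I_mul_div_eq_of_modEq _ h]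

lemma conj_idft {N : ℕ} (c : Fin N → ℂ) (m : ℤ) :
    starRingEnd ℂ (idft N c m) = idft N (fun p => starRingEnd ℂ (c p)) (-m) := by
  unfold idft
  rw [map_mul, map_sum]
  congr 1
  · simp [Complex.conj_ofReal]
  refine Finset.sum_congr rfl fun p _ => ?_
  rw [map_mul, ← Complex.exp_conj]
  congr 2
  simp [map_div₀, Complex.conj_ofReal, Complex.conj_I, map_ofNat]

theorem cyclic_prefix_half_shift_conj_general (N ν : ℕ) (hNeven : Even N)
    (c₀ c₁ : Fin N → ℂ) (hAL : ∀ p, c₁ p = (starRingEnd ℂ) (c₀ p))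
    (g₀ g₁ gt₀ gt₁ : ℤ → ℂ)
    (hg₀ : ∀ m : ℤ, g₀ m = (1 / Real.sqrt N) *
      ∑ p : Fin N, c₀ p * Complex.exp (2 * Real.pi * Complex.I * p * m / N))
    (hg₁ : ∀ m : ℤ, g₁ m = (1 / Real.sqrt N) *
      ∑ p : Fin N, c₁ p * Complex.exp (2 * Real.pi * Complex.I * p * m / N))
    (hgt₀ : ∀ n : ℤ, gt₀ n = g₀ ((n - (ν : ℤ)) % (N : ℤ)))
    (hgt₁ : ∀ n : ℤ, gt₁ n = g₁ ((n - (ν : ℤ)) % (N : ℤ))) :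
    ∀ n : ℤ, 0 ≤ n → n ≤ (ν : ℤ) →
      gt₀ (n + (N : ℤ) / 2) =
        (starRingEnd ℂ) (gt₁ ((-(n - (ν : ℤ))) % (N : ℤ) + ν + (N : ℤ) / 2)) := by
  intro n _ _
  have hg₀' : g₀ = idft N c₀ := funext hg₀
  have hg₁' : g₁ = idft N (fun p => starRingEnd ℂ (c₀ p)) := by
    funext m
    simp only [hg₁, hAL, idft]
  rw [hgt₀, hgt₁, hg₀', hg₁', conj_idft]
  simp only [Complex.conj_conj]
  apply idft_eq_of_modEq
  obtain ⟨t, rfl⟩ := hNeven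
  set M : ℤ := ((t + t : ℕ) : ℤ) with hM
  have half : M / 2 = t := by omega
  have reflected : ((-(n - ν)) % M + ν + M / 2 - ν) % M ≡ -(n - ν) + t [ZMOD M] := by
    rw [half, show ∀ a : ℤ, a + ν + t - ν = a + t from fun a => by ring]
    exact (Int.mod_modEq _ _).trans ((Int.mod_modEq _ _).add_right _)
  calc (n + M / 2 - ν) % M
      ≡ n + t - ν [ZMOD M] := half ▸ Int.mod_modEq _ _
    _ ≡ -(-(n - ν) + t) [ZMOD M] := Int.modEq_iff_dvd.mpr ⟨-1, by rw [hM]; push_cast; ring⟩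
    _ ≡ _ [ZMOD M] := reflected.symm.neg

/-- Property (3b) of Proposition 1 (τ = N/2): with the Alamouti relation
`c₁ = conj c₀`, the half-block-shifted cyclic-prefixed blocks satisfy the
conjugate reversal identity for n = 0,…,ν. -/
theorem cyclic_prefix_half_shift_conj (N ν : ℕ) (hNeven : Even N) (hN : 1 ≤ N)
    (hν : ν ≤ N / 2)
    (c₀ c₁ : Fin N → ℂ) (hAL : ∀ p, c₁ p = (starRingEnd ℂ) (c₀ p))
    (g₀ g₁ gt₀ gt₁ : ℤ → ℂ)
    (hg₀ : ∀ m : ℤ, g₀ m = (1 / Real.sqrt N) *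
      ∑ p : Fin N, c₀ p * Complex.exp (2 * Real.pi * Complex.I * p * m / N))
    (hg₁ : ∀ m : ℤ, g₁ m = (1 / Real.sqrt N) *
      ∑ p : Fin N, c₁ p * Complex.exp (2 * Real.pi * Complex.I * p * m / N))
    (hgt₀ : ∀ n : ℤ, gt₀ n = g₀ ((n - (ν : ℤ)) % (N : ℤ)))
    (hgt₁ : ∀ n : ℤ, gt₁ n = g₁ ((n - (ν : ℤ)) % (N : ℤ))) :
    ∀ n : ℤ, 0 ≤ n → n ≤ (ν : ℤ) →
      gt₀ (n + (N : ℤ) / 2) =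
        (starRingEnd ℂ) (gt₁ ((-(n - (ν : ℤ))) % (N : ℤ) + ν + (N : ℤ) / 2)) :=
  cyclic_prefix_half_shift_conj_general N ν hNeven c₀ c₁ hAL g₀ g₁ gt₀ gt₁ hg₀ hg₁ hgt₀ hgt₁
end

section
/- Let c₀, c₁ : Fin N → ℂ be sequences of independent zero-mean symbols with E[cᵤ(p) cᵥ(q)*] = σ² δ_{uv} δ_{pq} and E[cᵤ(p) cᵥ(q)] = 0. Define g̃ᵤ(n) = (1/√N) Σ_p cᵤ(p) e^{2πi p (n-ν)/N} for n = 0,...,N+ν-1. Then Σ_{n=0}^{N+ν-1} E[g̃₀(n) · conj(g̃₁(n))] = 0, while if instead c₁ = conj(c₀), then Σ_{n=0}^{N+ν-1} E[g̃₀(n) · g̃₁(mod(-(n-ν),N)+ν)] = (N+ν) σ². -/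
/-!
Both identities hold term by term in `n`. Expanding the two OFDM symbols bilinearly, the
expectation of a product is a double sum over subcarriers `p, q` of the symbol correlations. For
independent streams every such correlation vanishes. For Alamouti-conjugated streams only the
diagonal `p = q` survives, and there the time reversal `n - ν ↦ (-(n - ν)) mod N` makes the two
subcarrier phases cancel, since `N ∣ t + (-t) % N`; each diagonal term is then `σ² / N`, so each
`n` contributes `σ²`.
-/

open Complex Real
open scoped ComplexConjugate

theorem exp_two_pi_I_mul_div_eq_one {N k : ℤ} (h : N ∣ k) :
    exp (2 * π * I * k / N) = 1 := by
  obtain ⟨m, rfl⟩ := h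
  rcases eq_or_ne N 0 with rfl | hN
  · simp
  have hN' : (N : ℂ) ≠ 0 := by exact_mod_cast hN
  calc exp (2 * π * I * ↑(N * m) / N) = exp (m * (2 * π * I)) := by
        congr 1; push_cast; field_simp
    _ = 1 := exp_int_mul_two_pi_mul_I m

theorem exp_two_pi_I_mul_div_mul_exp_neg_emod (N : ℕ) (p t : ℤ) :
    exp (2 * π * I * p * t / N) * exp (2 * π * I * p * ((-t) % (N : ℤ) : ℤ) / N) = 1 := by
  have hdvd : (N : ℤ) ∣ p * (t + (-t) % N) := by
    have h := (Int.mod_modEq (-t) N).dvd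
    rw [show -t - (-t) % N = -(t + (-t) % N) by ring, dvd_neg] at h
    exact h.mul_left p
  rw [← Complex.exp_add, ← exp_two_pi_I_mul_div_eq_one hdvd]
  congr 1
  push_cast
  ring

theorem map_sum_mul_sum {Ω R M ι κ : Type*} [CommSemiring R] [AddCommMonoid M] [Module R M]
    [Fintype ι] [Fintype κ] (E : (Ω → R) →ₗ[R] M) (a : ι → R) (X : ι → Ω → R)
    (b : κ → R) (Y : κ → Ω → R) :
    E (fun ω => (∑ i, a i * X i ω) * ∑ j, b j * Y j ω) =
      ∑ i, ∑ j, (a i * b j) • E (fun ω => X i ω * Y j ω) := by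
  have hexpand : (fun ω => (∑ i, a i * X i ω) * ∑ j, b j * Y j ω) =
      ∑ i, ∑ j, (a i * b j) • fun ω => X i ω * Y j ω := by
    funext ω
    simp only [Finset.sum_apply, Pi.smul_apply, smul_eq_mul, Finset.sum_mul_sum]
    exact Finset.sum_congr rfl fun i _ => Finset.sum_congr rfl fun j _ => by ring
  simp only [hexpand, map_sum, map_smul]

section OFDM

variable {Ω : Type*} (N ν : ℕ)

noncomputable def subcarrier (p : Fin N) (n : ℤ) : ℂ :=
  exp (2 * π * I * p * (n - (ν : ℤ)) / N)

/-- The cyclic-prefixed OFDM symbol `g̃(n)` carrying the data `c`. -/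
noncomputable def ofdmSymbol (c : Fin N → Ω → ℂ) (n : ℤ) (ω : Ω) : ℂ :=
  (1 / Real.sqrt N) * ∑ p : Fin N, c p ω * subcarrier N ν p n

variable {N ν}

theorem ofdmSymbol_eq_sum (c : Fin N → Ω → ℂ) (n : ℤ) (ω : Ω) :
    ofdmSymbol N ν c n ω = ∑ p, (1 / Real.sqrt N * subcarrier N ν p n) * c p ω := by
  rw [ofdmSymbol, Finset.mul_sum]
  exact Finset.sum_congr rfl fun p _ => by ring

theorem subcarrier_mul_subcarrier_reverse (p : Fin N) (n : ℤ) :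
    subcarrier N ν p n * subcarrier N ν p ((-(n - ν)) % N + ν) = 1 := by
  simpa [subcarrier] using exp_two_pi_I_mul_div_mul_exp_neg_emod N p (n - ν)

theorem expect_ofdmSymbol_mul_conj_eq_zero (E : (Ω → ℂ) →ₗ[ℂ] ℂ) (c d : Fin N → Ω → ℂ)
    (hcd : ∀ p q, E (fun ω => c p ω * conj (d q ω)) = 0) (n : ℤ) :
    E (fun ω => ofdmSymbol N ν c n ω * conj (ofdmSymbol N ν d n ω)) = 0 := by
  simp only [ofdmSymbol_eq_sum, map_sum, map_mul, map_sum_mul_sum, hcd, smul_zero,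
    Finset.sum_const_zero]

theorem expect_ofdmSymbol_mul_reverse_conj (hN : N ≠ 0) (E : (Ω → ℂ) →ₗ[ℂ] ℂ) (σ2 : ℂ)
    (c : Fin N → Ω → ℂ) (hc : ∀ p q, E (fun ω => c p ω * conj (c q ω)) = if p = q then σ2 else 0)
    (n : ℤ) :
    E (fun ω => ofdmSymbol N ν c n ω *
      ofdmSymbol N ν (fun p ω => conj (c p ω)) ((-(n - ν)) % N + ν) ω) = σ2 := by
  have hN' : (N : ℂ) ≠ 0 := by exact_mod_cast hN
  have hdiag : ∀ p : Fin N, (1 / Real.sqrt N * subcarrier N ν p n) *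
      (1 / Real.sqrt N * subcarrier N ν p ((-(n - ν)) % N + ν)) = 1 / N := by
    intro p
    have hsqrt : ((Real.sqrt N : ℝ) : ℂ) * (Real.sqrt N : ℝ) = N := by
      exact_mod_cast Real.mul_self_sqrt (Nat.cast_nonneg N)
    calc _ = 1 / (((Real.sqrt N : ℝ) : ℂ) * (Real.sqrt N : ℝ)) *
          (subcarrier N ν p n * subcarrier N ν p ((-(n - ν)) % N + ν)) := by ring
      _ = 1 / N := by rw [hsqrt, subcarrier_mul_subcarrier_reverse, mul_one]
  simp only [ofdmSymbol_eq_sum, map_sum_mul_sum, hc, smul_eq_mul, mul_ite, mul_zero,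
    Finset.sum_ite_eq, Finset.mem_univ, if_true, hdiag]
  rw [Finset.sum_const, Finset.card_univ, Fintype.card_fin, nsmul_eq_mul]
  field_simp

end OFDM

theorem ofdm_cross_correlation_general (N ν : ℕ) (hN : 1 ≤ N)
    (Ω : Type*) (E : (Ω → ℂ) →ₗ[ℂ] ℂ) (σ2 : ℝ)
    (c : Fin 2 → Fin N → Ω → ℂ) (gt : Fin 2 → ℤ → Ω → ℂ)
    (hgt : ∀ u (n : ℤ) ω, gt u n ω = (1 / Real.sqrt N) *
      ∑ p : Fin N, c u p ω *
        Complex.exp (2 * Real.pi * Complex.I * p * (n - (ν : ℤ)) / N)) :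
    ((∀ u v (p q : Fin N),
        E (fun ω => c u p ω * (starRingEnd ℂ) (c v q ω)) =
          if u = v ∧ p = q then (σ2 : ℂ) else 0) →
      (∀ u v (p q : Fin N), E (fun ω => c u p ω * c v q ω) = 0) →
      ∑ n ∈ Finset.range (N + ν),
        E (fun ω => gt 0 n ω * (starRingEnd ℂ) (gt 1 n ω)) = 0) ∧
    ((∀ p q : Fin N,
        E (fun ω => c 0 p ω * (starRingEnd ℂ) (c 0 q ω)) =
          if p = q then (σ2 : ℂ) else 0) →
      (∀ p ω, c 1 p ω = (starRingEnd ℂ) (c 0 p ω)) →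
      ∑ n ∈ Finset.range (N + ν),
        E (fun ω => gt 0 n ω *
          gt 1 ((-((n : ℤ) - (ν : ℤ))) % (N : ℤ) + (ν : ℤ)) ω) =
        ((N : ℂ) + (ν : ℂ)) * (σ2 : ℂ)) := by
  obtain rfl : gt = fun u => ofdmSymbol N ν (c u) := by
    funext u n ω
    exact hgt u n ω
  refine ⟨fun hcorr _ => Finset.sum_eq_zero fun n _ => ?_, fun hcorr hconj => ?_⟩
  · exact expect_ofdmSymbol_mul_conj_eq_zero E (c 0) (c 1)
      (fun p q => by simpa using hcorr 0 1 p q) n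
  · have hc1 : c 1 = fun p ω => conj (c 0 p ω) := funext fun p => funext (hconj p)
    simp only [hc1, expect_ofdmSymbol_mul_reverse_conj (by omega) E σ2 (c 0) hcorr,
      Finset.sum_const, Finset.card_range, nsmul_eq_mul]
    push_cast
    ring

/-- Cross-correlation of OFDM blocks: for independent (spatial-multiplexing)
streams the total cross-correlation vanishes, whereas for Alamouti-conjugated
streams the reversed cross-correlation at lag τ = 0 equals (N+ν)σ². -/
theorem ofdm_cross_correlation (N ν : ℕ) (hN : 1 ≤ N) (hν : ν ≤ N)
    (Ω : Type*) (E : (Ω → ℂ) →ₗ[ℂ] ℂ) (σ2 : ℝ) (hσ : 0 < σ2)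
    (c : Fin 2 → Fin N → Ω → ℂ) (gt : Fin 2 → ℤ → Ω → ℂ)
    (hgt : ∀ u (n : ℤ) ω, gt u n ω = (1 / Real.sqrt N) *
      ∑ p : Fin N, c u p ω *
        Complex.exp (2 * Real.pi * Complex.I * p * (n - (ν : ℤ)) / N)) :
    ((∀ u v (p q : Fin N),
        E (fun ω => c u p ω * (starRingEnd ℂ) (c v q ω)) =
          if u = v ∧ p = q then (σ2 : ℂ) else 0) →
      (∀ u v (p q : Fin N), E (fun ω => c u p ω * c v q ω) = 0) →
      ∑ n ∈ Finset.range (N + ν),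
        E (fun ω => gt 0 n ω * (starRingEnd ℂ) (gt 1 n ω)) = 0) ∧
    ((∀ p q : Fin N,
        E (fun ω => c 0 p ω * (starRingEnd ℂ) (c 0 q ω)) =
          if p = q then (σ2 : ℂ) else 0) →
      (∀ p ω, c 1 p ω = (starRingEnd ℂ) (c 0 p ω)) →
      ∑ n ∈ Finset.range (N + ν),
        E (fun ω => gt 0 n ω *
          gt 1 ((-((n : ℤ) - (ν : ℤ))) % (N : ℤ) + (ν : ℤ)) ω) =
        ((N : ℂ) + (ν : ℂ)) * (σ2 : ℂ)) :=
  ofdm_cross_correlation_general N ν hN Ω E σ2 c gt hgt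
end
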